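/- arXiv:1802.05761 — 3 statements merged into one kernel-verified Lean document; each statement's English description precedes it below -/
import Mathlib

section
/- Suppose G is invertible and, for every j = 2, …, n, the sub-matrix Q_j := Q(W, G, (c_{il})_{n−j+1 ≤ i ≠ l ≤ n}; j) (built from the constants c_{il} with indices in {n−j+1, …, n}) is invertible. Then Q = Q(W, G, (c_{ij}); n) is invertible and there exist real constants k_{ij} (1 ≤ i,j ≤ n), k_i (1 ≤ i ≤ n) and c such that ((k_{ij}), (k_i)) satisfy the kriging constraints and Q^{-1} = M((k_{ij}), (k_i), c; n). -/
open Matrix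

noncomputable section

/-- Block matrix built from an n×n array of k×k real blocks. -/
def blockMat (n k : ℕ) (B : Fin n → Fin n → Matrix (Fin k) (Fin k) ℝ) :
    Matrix (Fin n × Fin k) (Fin n × Fin k) ℝ :=
  Matrix.of fun p q => B p.1 q.1 p.2 q.2

/-- The k(n+1)×k(n+1) block matrix Q(W, G, (c_{ij}); n): diagonal blocks W,
    off-diagonal (i,j) blocks W − c_{ij}·G for i,j ≤ n, identity blocks in the
    last block row/column (except the (n+1,n+1) block, which is zero). -/
def krigQ (n k : ℕ) (W G : Matrix (Fin k) (Fin k) ℝ) (c : Fin n → Fin n → ℝ) :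
    Matrix (Fin (n + 1) × Fin k) (Fin (n + 1) × Fin k) ℝ :=
  blockMat (n + 1) k fun i j =>
    if hi : (i : ℕ) < n then
      if hj : (j : ℕ) < n then
        if i = j then W else W - c ⟨i, hi⟩ ⟨j, hj⟩ • G
      else (1 : Matrix (Fin k) (Fin k) ℝ)
    else if hj : (j : ℕ) < n then (1 : Matrix (Fin k) (Fin k) ℝ)
      else (0 : Matrix (Fin k) (Fin k) ℝ)

/-- The k(n+1)×k(n+1) block matrix M((k_{ij}), (k_i), c; n): (i,j) block
    k_{ij}·G⁻¹ for i,j ≤ n, blocks k_i·I in the last block row/column, and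
    (n+1,n+1) block c·G − W. -/
def krigM (n k : ℕ) (W G : Matrix (Fin k) (Fin k) ℝ)
    (kk : Fin n → Fin n → ℝ) (kv : Fin n → ℝ) (c : ℝ) :
    Matrix (Fin (n + 1) × Fin k) (Fin (n + 1) × Fin k) ℝ :=
  blockMat (n + 1) k fun i j =>
    if hi : (i : ℕ) < n then
      if hj : (j : ℕ) < n then kk ⟨i, hi⟩ ⟨j, hj⟩ • G⁻¹
      else kv ⟨i, hi⟩ • (1 : Matrix (Fin k) (Fin k) ℝ)
    else if hj : (j : ℕ) < n then kv ⟨j, hj⟩ • (1 : Matrix (Fin k) (Fin k) ℝ)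
      else c • G - W

/-- The kriging constraints: symmetry of the k_{ij}, zero column sums of the
    k_{ij}, and the k_i summing to one. -/
def krigConstraints (n : ℕ) (kk : Fin n → Fin n → ℝ) (kv : Fin n → ℝ) : Prop :=
  (∀ i j, kk i j = kk j i) ∧ (∀ j, ∑ i, kk i j = 0) ∧ (∑ i, kv i) = 1

/-- The k × k(n+1) block row matrix B = (W − c₁·G, …, W − cₙ·G, I). -/
def krigB (n k : ℕ) (W G : Matrix (Fin k) (Fin k) ℝ) (cs : Fin n → ℝ) :
    Matrix (Fin k) (Fin (n + 1) × Fin k) ℝ :=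
  Matrix.of fun a q =>
    (if h : (q.1 : ℕ) < n then W - cs ⟨q.1, h⟩ • G
      else (1 : Matrix (Fin k) (Fin k) ℝ)) a q.2

end

/-!
Write `Γ` for the `n × n` matrix equal to `-c` off the diagonal and `0` on it. Then `Q` has blocks
`W + Γᵢⱼ • G` bordered by identity blocks, and `M` has blocks `kᵢⱼ • G⁻¹` bordered by `kᵢ • I`.
Multiplying out `Q * M`, the terms in `W` cancel exactly because of the kriging constraints, and
`Q * M = 1` reduces to the scalar identity `[[Γ, 1], [1ᵀ, 0]] * [[(kᵢⱼ), (kᵢ)], [(kᵢ)ᵀ, c]] = 1`,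
whose last row is again the kriging constraints. So it suffices that the scalar bordered matrix be
invertible: its inverse is symmetric and the coefficients are read off from it. Its invertibility
follows from that of `Q`, since a kernel vector `(x, t)` of the scalar matrix yields the kernel
vector `(x₁ u, …, xₙ u, t G u)` of `Q` for any `u ≠ 0`.
-/

open Matrix

section Bordered

variable {m α : Type*}

def borderedMat (A : Matrix m m α) (v : m → α) (d : α) : Matrix (m ⊕ Unit) (m ⊕ Unit) α :=
  fromBlocks A (replicateCol Unit v) (replicateRow Unit v) (of fun _ _ => d)

@[simp] lemma borderedMat_inl_inl (A : Matrix m m α) (v : m → α) (d : α) (i j : m) :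
    borderedMat A v d (.inl i) (.inl j) = A i j := rfl

@[simp] lemma borderedMat_inl_inr (A : Matrix m m α) (v : m → α) (d : α) (i : m) (u : Unit) :
    borderedMat A v d (.inl i) (.inr u) = v i := rfl

@[simp] lemma borderedMat_inr_inl (A : Matrix m m α) (v : m → α) (d : α) (u : Unit) (j : m) :
    borderedMat A v d (.inr u) (.inl j) = v j := rfl

@[simp] lemma borderedMat_inr_inr (A : Matrix m m α) (v : m → α) (d : α) (u u' : Unit) :
    borderedMat A v d (.inr u) (.inr u') = d := rfl

lemma Matrix.IsSymm.eq_borderedMat {K : Matrix (m ⊕ Unit) (m ⊕ Unit) α} (hK : K.IsSymm) :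
    K = borderedMat K.toBlocks₁₁ (fun i => K (.inl i) (.inr ())) (K (.inr ()) (.inr ())) := by
  ext (i | ⟨⟩) (j | ⟨⟩)
  · rfl
  · rfl
  · exact hK.apply _ _
  · rfl

end Bordered

section BlockMat

variable {n k : ℕ}

lemma blockMat_mul_blockMat (B C : Fin n → Fin n → Matrix (Fin k) (Fin k) ℝ) :
    blockMat n k B * blockMat n k C = blockMat n k fun i j => ∑ l, B i l * C l j := by
  ext ⟨i, x⟩ ⟨j, y⟩
  simp [blockMat, mul_apply, Matrix.sum_apply, Fintype.sum_prod_type]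

lemma blockMat_one : blockMat n k (fun i j => if i = j then 1 else 0) = 1 := by
  ext ⟨i, x⟩ ⟨j, y⟩
  by_cases hij : i = j <;> simp [blockMat, one_apply, hij]

lemma blockMat_mulVec (B : Fin n → Fin n → Matrix (Fin k) (Fin k) ℝ) (x : Fin n → Fin k → ℝ) :
    blockMat n k B *ᵥ (fun p => x p.1 p.2) = fun p => (∑ l, B p.1 l *ᵥ x l) p.2 := by
  ext ⟨i, a⟩
  simp [blockMat, mulVec, dotProduct, Finset.sum_apply, Fintype.sum_prod_type]

end BlockMat


section Kriging

variable {n k : ℕ}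

def krigOffDiag (c : Fin n → Fin n → ℝ) : Matrix (Fin n) (Fin n) ℝ :=
  of fun i j => if i = j then 0 else -c i j

def krigScalar (c : Fin n → Fin n → ℝ) : Matrix (Fin n ⊕ Unit) (Fin n ⊕ Unit) ℝ :=
  borderedMat (krigOffDiag c) 1 0

lemma krigScalar_isSymm {c : Fin n → Fin n → ℝ} (hc : ∀ i j, c i j = c j i) :
    (krigScalar c).IsSymm := by
  ext (i | ⟨⟩) (j | ⟨⟩) <;> simp [krigScalar, krigOffDiag, eq_comm, hc]

lemma krigQ_eq_blockMat (W G : Matrix (Fin k) (Fin k) ℝ) (c : Fin n → Fin n → ℝ) :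
    krigQ n k W G c = blockMat (n + 1) k
      (Fin.lastCases (Fin.lastCases 0 fun _ => 1)
        fun i => Fin.lastCases 1 fun j => W + krigOffDiag c i j • G) := by
  unfold krigQ
  congr 1
  ext1 i; ext1 j
  induction i using Fin.lastCases <;> induction j using Fin.lastCases <;> simp
  split_ifs <;> simp [krigOffDiag, sub_eq_add_neg, *]

lemma krigM_eq_blockMat (W G : Matrix (Fin k) (Fin k) ℝ) (kk : Fin n → Fin n → ℝ)
    (kv : Fin n → ℝ) (ct : ℝ) :
    krigM n k W G kk kv ct = blockMat (n + 1) k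
      (Fin.lastCases (Fin.lastCases (ct • G - W) fun j => kv j • 1)
        fun i => Fin.lastCases (kv i • 1) fun j => kk i j • G⁻¹) := by
  unfold krigM
  congr 1
  ext1 i; ext1 j
  induction i using Fin.lastCases <;> induction j using Fin.lastCases <;> simp

variable {c kk : Fin n → Fin n → ℝ} {kv : Fin n → ℝ} {ct : ℝ}

lemma krig_equations_of_mul_eq_one (h : krigScalar c * borderedMat (of kk) kv ct = 1) :
    (∀ i j, ∑ l, krigOffDiag c i l * kk l j + kv j = if i = j then 1 else 0) ∧
    (∀ i, ∑ l, krigOffDiag c i l * kv l + ct = 0) ∧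
    (∀ j, ∑ i, kk i j = 0) ∧ ∑ i, kv i = 1 := by
  refine ⟨fun i j => ?_, fun i => ?_, fun j => ?_, ?_⟩
  · simpa [krigScalar, mul_apply, one_apply] using congrFun₂ h (.inl i) (.inl j)
  · simpa [krigScalar, mul_apply] using congrFun₂ h (.inl i) (.inr ())
  · simpa [krigScalar, mul_apply] using congrFun₂ h (.inr ()) (.inl j)
  · simpa [krigScalar, mul_apply] using congrFun₂ h (.inr ()) (.inr ())

lemma krigConstraints_of_mul_eq_one (hkk : ∀ i j, kk i j = kk j i)
    (h : krigScalar c * borderedMat (of kk) kv ct = 1) : krigConstraints n kk kv :=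
  have ⟨_, _, hcol, hsum⟩ := krig_equations_of_mul_eq_one h
  ⟨hkk, hcol, hsum⟩

lemma krigQ_mul_krigM_eq_one {W G : Matrix (Fin k) (Fin k) ℝ} (hG : IsUnit G)
    (h : krigScalar c * borderedMat (of kk) kv ct = 1) :
    krigQ n k W G c * krigM n k W G kk kv ct = 1 := by
  obtain ⟨hkk, hkv, hcol, hsum⟩ := krig_equations_of_mul_eq_one h
  have hGG : G * G⁻¹ = 1 := mul_nonsing_inv G ((isUnit_iff_isUnit_det G).mp hG)
  rw [krigQ_eq_blockMat, krigM_eq_blockMat, blockMat_mul_blockMat, ← blockMat_one]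
  congr 1
  ext1 i; ext1 j
  induction i using Fin.lastCases <;> induction j using Fin.lastCases <;>
    simp only [Fin.sum_univ_castSucc, Fin.lastCases_castSucc, Fin.lastCases_last, add_mul,
      smul_mul_assoc, mul_smul_comm, smul_add, smul_smul, smul_zero, add_zero, hGG,
      Matrix.one_mul, Matrix.mul_one, zero_mul, Finset.sum_add_distrib, ← Finset.sum_smul,
      mul_comm (kv _), mul_comm (kk _ _), Fin.castSucc_inj, Fin.castSucc_ne_last,
      (Fin.castSucc_ne_last _).symm, if_true, if_false]
  case last.last => rw [hsum, one_smul]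
  case last.cast j => rw [hcol, zero_smul]
  case cast.last i => rw [hsum, eq_neg_of_add_eq_zero_left (hkv i)]; module
  case cast.cast i j =>
    rw [hcol, eq_sub_of_add_eq (hkk i j)]
    split_ifs <;> module

lemma krigQ_mulVec_eq_zero (W G : Matrix (Fin k) (Fin k) ℝ) {v : Fin n ⊕ Unit → ℝ}
    (hv : krigScalar c *ᵥ v = 0) :
    krigQ n k W G c *ᵥ
      (fun p => Fin.lastCases (v (.inr ()) • (G *ᵥ 1)) (fun l => v (.inl l) • 1) p.1 p.2) = 0 := by
  have hrow : ∀ i, ∑ l, krigOffDiag c i l * v (.inl l) + v (.inr ()) = 0 := fun i => by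
    simpa [krigScalar, mulVec, dotProduct] using congrFun hv (.inl i)
  have hsum : ∑ l, v (.inl l) = 0 := by
    simpa [krigScalar, mulVec, dotProduct] using congrFun hv (.inr ())
  rw [krigQ_eq_blockMat, blockMat_mulVec]
  refine funext fun ⟨i, a⟩ => congrFun (?_ : _ = (0 : Fin k → ℝ)) a
  induction i using Fin.lastCases <;>
    simp only [Fin.sum_univ_castSucc, Fin.lastCases_castSucc, Fin.lastCases_last, add_mulVec,
      smul_mulVec, mulVec_smul, one_mulVec, zero_mulVec, smul_zero, add_zero, smul_add, smul_smul,
      Finset.sum_add_distrib, ← Finset.sum_smul, mul_comm (v _)]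
  case last => rw [hsum, zero_smul]
  case cast i => rw [hsum, eq_neg_of_add_eq_zero_left (hrow i)]; module

lemma isUnit_krigScalar_of_isUnit_krigQ (hk : 0 < k) (hn : 0 < n)
    {W G : Matrix (Fin k) (Fin k) ℝ} (hQ : IsUnit (krigQ n k W G c)) : IsUnit (krigScalar c) := by
  rw [isUnit_iff_isUnit_det, isUnit_iff_ne_zero]
  intro hdet
  obtain ⟨v, hv0, hv⟩ := exists_mulVec_eq_zero_iff.mpr hdet
  refine ((isUnit_iff_isUnit_det _).mp hQ).ne_zero
    (exists_mulVec_eq_zero_iff.mp ⟨_, fun hX => hv0 ?_, krigQ_mulVec_eq_zero W G hv⟩)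
  have hinl : ∀ l, v (.inl l) = 0 := fun l => by
    simpa using congrFun hX (l.castSucc, ⟨0, hk⟩)
  have hinr : v (.inr ()) = 0 := by
    simpa [krigScalar, mulVec, dotProduct, hinl] using congrFun hv (.inl ⟨0, hn⟩)
  ext (l | ⟨⟩)
  exacts [hinl l, hinr]

end Kriging

/-- If G is invertible and every sub-matrix Q_j (j = 2, …, n), built from the
    constants c_{il} with indices in {n−j+1, …, n}, is invertible, then
    Q(W, G, (c_{ij}); n) is invertible and its inverse is of the form
    M((k_{ij}), (k_i), c; n) with coefficients satisfying the kriging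
    constraints. -/
theorem stmt2 (k n : ℕ) (hk : 1 ≤ k) (hn : 2 ≤ n)
    (W G : Matrix (Fin k) (Fin k) ℝ)
    (hGinv : IsUnit G)
    (c : Fin n → Fin n → ℝ) (hc : ∀ i j, c i j = c j i)
    (hsub : ∀ j : ℕ, 2 ≤ j → (hj : j ≤ n) →
      IsUnit (krigQ j k W G fun a b =>
        c ⟨n - j + (a : ℕ), by have := a.isLt; omega⟩
          ⟨n - j + (b : ℕ), by have := b.isLt; omega⟩)) :
    IsUnit (krigQ n k W G c) ∧
    ∃ (kk : Fin n → Fin n → ℝ) (kv : Fin n → ℝ) (ct : ℝ),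
      krigConstraints n kk kv ∧ (krigQ n k W G c)⁻¹ = krigM n k W G kk kv ct := by
  have hQ : IsUnit (krigQ n k W G c) := by simpa using hsub n hn le_rfl
  have hC : IsUnit (krigScalar c) := isUnit_krigScalar_of_isUnit_krigQ hk (by omega) hQ
  have hK : (krigScalar c)⁻¹.IsSymm := (krigScalar_isSymm hc).inv
  have hCK := mul_nonsing_inv _ ((isUnit_iff_isUnit_det _).mp hC)
  rw [hK.eq_borderedMat] at hCK
  exact ⟨hQ, _, _, _, krigConstraints_of_mul_eq_one (fun i j => hK.apply _ _) hCK,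
    inv_eq_right_inv (krigQ_mul_krigM_eq_one hGinv hCK)⟩
end

section
/- Let m ≥ 3, let W and G be symmetric k×k real matrices with G invertible, let c₂, …, c_m be real constants, and let k_{ij} (1 ≤ i,j ≤ m−1), k_i (1 ≤ i ≤ m−1) and c̃ be real constants such that ((k_{ij}), (k_i)) satisfy the kriging constraints. Let B be the k × km block row matrix (W − c₂·G, …, W − c_m·G, I) and let M := M((k_{ij}), (k_i), c̃; m−1). Define β_i := k_i − ∑_{l=1}^{m−1} c_{l+1} k_{li}, g := c̃ − ∑_{l=1}^{m−1} c_{l+1} k_l, and suppose k* := 2·∑_{l=1}^{m−1} c_{l+1} k_l − ∑_{l=1}^{m−1} ∑_{j=1}^{m−1} c_{l+1} c_{j+1} k_{lj} − c̃ is nonzero. Then the km × km matrix K := M + M·Bᵀ·((1/k*)·G^{-1})·B·M has the following block structure: for 1 ≤ i,j ≤ m−1 its (i,j) block equals (k_{ij} + β_i β_j / k*)·G^{-1}; for 1 ≤ i ≤ m−1 its (i,m) and (m,i) blocks equal (k_i + β_i g / k*)·I; and its (m,m) block equals (c̃ + g²/k*)·G − W. -/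
open Matrix

/-! Since the kriging column sums vanish and the `k_i` sum to one, `B * M` collapses to the
block row `(β₁ I, …, βₙ I, g G)`. As `M` is symmetric, `M * Bᵀ = (B * M)ᵀ`, so the correction
term is this block row paired with itself through `(1/k*) G⁻¹`, and its blocks are products of
scalar multiples of `I`, `G` and `G⁻¹`. -/

def blockRow (n k : ℕ) (R : Fin n → Matrix (Fin k) (Fin k) ℝ) :
    Matrix (Fin k) (Fin n × Fin k) ℝ :=
  Matrix.of fun a q => R q.1 a q.2

section BlockAlgebra

variable {n k : ℕ}

theorem blockMat_add (A B : Fin n → Fin n → Matrix (Fin k) (Fin k) ℝ) :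
    blockMat n k A + blockMat n k B = blockMat n k (fun i j => A i j + B i j) :=
  rfl

theorem transpose_blockMat (A : Fin n → Fin n → Matrix (Fin k) (Fin k) ℝ) :
    (blockMat n k A)ᵀ = blockMat n k (fun i j => (A j i)ᵀ) :=
  rfl

theorem blockRow_mul_blockMat (R : Fin n → Matrix (Fin k) (Fin k) ℝ)
    (A : Fin n → Fin n → Matrix (Fin k) (Fin k) ℝ) :
    blockRow n k R * blockMat n k A = blockRow n k (fun j => ∑ i, R i * A i j) := by
  ext a ⟨j, b⟩
  simp only [blockRow, blockMat, mul_apply, of_apply, Fintype.sum_prod_type, Matrix.sum_apply]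

theorem transpose_blockRow_mul_mul_blockRow (R S : Fin n → Matrix (Fin k) (Fin k) ℝ)
    (X : Matrix (Fin k) (Fin k) ℝ) :
    (blockRow n k R)ᵀ * X * blockRow n k S = blockMat n k (fun i j => (R i)ᵀ * X * S j) := by
  ext ⟨i, a⟩ ⟨j, b⟩
  simp [blockRow, blockMat, mul_apply]

end BlockAlgebra

section Kriging

variable {n k : ℕ} {W G : Matrix (Fin k) (Fin k) ℝ}

theorem krigB_eq_blockRow (cs : Fin n → ℝ) :
    krigB n k W G cs = blockRow (n + 1) k (fun i =>
      if h : (i : ℕ) < n then W - cs ⟨i, h⟩ • G else 1) :=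
  rfl

theorem krigM_transpose (hW : W.IsSymm) (hG : G.IsSymm) {kk : Fin n → Fin n → ℝ}
    (hkk : ∀ i j, kk i j = kk j i) (kv : Fin n → ℝ) (c : ℝ) :
    (krigM n k W G kk kv c)ᵀ = krigM n k W G kk kv c := by
  have hGinv : (G⁻¹)ᵀ = G⁻¹ := by rw [transpose_nonsing_inv, hG.eq]
  rw [krigM, transpose_blockMat]
  congr 1
  ext1 i; ext1 j
  by_cases hi : (i : ℕ) < n <;> by_cases hj : (j : ℕ) < n <;>
    simp [hi, hj, hkk ⟨i, _⟩, hGinv, hW.eq, hG.eq]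

theorem krigB_mul_krigM (hG : IsUnit G) (cs : Fin n → ℝ) {kk : Fin n → Fin n → ℝ}
    {kv : Fin n → ℝ} (hcol : ∀ j, ∑ i, kk i j = 0) (hsum : ∑ i, kv i = 1) (c : ℝ) :
    krigB n k W G cs * krigM n k W G kk kv c = blockRow (n + 1) k (fun j =>
      if h : (j : ℕ) < n then (kv ⟨j, h⟩ - ∑ l, cs l * kk l ⟨j, h⟩) • 1
      else (c - ∑ l, cs l * kv l) • G) := by
  have hGG : G * G⁻¹ = 1 := mul_nonsing_inv G ((isUnit_iff_isUnit_det G).mp hG)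
  rw [krigB_eq_blockRow, krigM, blockRow_mul_blockMat]
  congr 1
  ext1 j
  simp only [Fin.sum_univ_castSucc, Fin.val_castSucc, Fin.is_lt, dite_true, Fin.val_last,
    lt_irrefl, dite_false, Fin.eta, one_mul]
  by_cases hj : (j : ℕ) < n
  · have hterm : ∀ l, (W - cs l • G) * (kk l ⟨j, hj⟩ • G⁻¹)
        = kk l ⟨j, hj⟩ • (W * G⁻¹) - (cs l * kk l ⟨j, hj⟩) • (1 : Matrix (Fin k) (Fin k) ℝ) := by
      intro l
      rw [sub_mul, Matrix.mul_smul, Matrix.smul_mul, Matrix.mul_smul, smul_smul, hGG]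
    simp only [hj, dite_true, hterm, Finset.sum_sub_distrib, ← Finset.sum_smul, hcol,
      zero_smul, zero_sub, sub_smul]
    abel
  · have hterm : ∀ l, (W - cs l • G) * (kv l • (1 : Matrix (Fin k) (Fin k) ℝ))
        = kv l • W - (cs l * kv l) • G := by
      intro l
      rw [Matrix.mul_smul, mul_one, smul_sub, smul_smul, mul_comm (kv l)]
    simp only [hj, dite_false, hterm, Finset.sum_sub_distrib, ← Finset.sum_smul, hsum,
      one_smul, sub_smul]
    abel

end Kriging

/-- Here `m = n + 1`, and `cs l` for `l : Fin n` is the paper's `c_{l+2}`. -/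
theorem stmt7_general (k n : ℕ)
    (W G : Matrix (Fin k) (Fin k) ℝ) (hW : W.IsSymm) (hG : G.IsSymm)
    (hGinv : IsUnit G) (cs : Fin n → ℝ)
    (kk : Fin n → Fin n → ℝ) (kv : Fin n → ℝ) (ct : ℝ)
    (hconstr : krigConstraints n kk kv)
    (β : Fin n → ℝ) (hβ : ∀ i, β i = kv i - ∑ l, cs l * kk l i)
    (g : ℝ) (hg : g = ct - ∑ l, cs l * kv l)
    (kstar : ℝ) :
    krigM n k W G kk kv ct +
      krigM n k W G kk kv ct * (krigB n k W G cs)ᵀ * ((1 / kstar) • G⁻¹) *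
        krigB n k W G cs * krigM n k W G kk kv ct =
    blockMat (n + 1) k (fun i j =>
      if hi : (i : ℕ) < n then
        if hj : (j : ℕ) < n then
          (kk ⟨i, hi⟩ ⟨j, hj⟩ + β ⟨i, hi⟩ * β ⟨j, hj⟩ / kstar) • G⁻¹
        else (kv ⟨i, hi⟩ + β ⟨i, hi⟩ * g / kstar) •
          (1 : Matrix (Fin k) (Fin k) ℝ)
      else if hj : (j : ℕ) < n then
        (kv ⟨j, hj⟩ + β ⟨j, hj⟩ * g / kstar) • (1 : Matrix (Fin k) (Fin k) ℝ)
      else (ct + g ^ 2 / kstar) • G - W) := by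
  obtain ⟨hsym, hcol, hsum⟩ := hconstr
  obtain rfl : β = fun i => kv i - ∑ l, cs l * kk l i := funext hβ
  subst hg
  have hdet : IsUnit G.det := (isUnit_iff_isUnit_det G).mp hGinv
  have hMB : krigM n k W G kk kv ct * (krigB n k W G cs)ᵀ
      = (krigB n k W G cs * krigM n k W G kk kv ct)ᵀ := by
    rw [transpose_mul, krigM_transpose hW hG hsym]
  rw [hMB, Matrix.mul_assoc _ (krigB n k W G cs), krigB_mul_krigM hGinv cs hcol hsum,
    transpose_blockRow_mul_mul_blockRow, krigM, blockMat_add]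
  congr 1
  ext1 i; ext1 j
  by_cases hi : (i : ℕ) < n <;> by_cases hj : (j : ℕ) < n <;>
    simp only [hi, hj, dite_true, dite_false, transpose_smul, transpose_one, hG.eq,
      Matrix.smul_mul, Matrix.mul_smul, Matrix.one_mul, Matrix.mul_one,
      mul_nonsing_inv G hdet, nonsing_inv_mul G hdet] <;>
    module

/-- With m = n+1 (so m ≥ 3 means n ≥ 2) and cs i = c_{i+1}: the block
    structure of K = M + M·Bᵀ·((1/k*)·G⁻¹)·B·M. -/
theorem stmt7 (k n : ℕ) (hk : 1 ≤ k) (hn : 2 ≤ n)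
    (W G : Matrix (Fin k) (Fin k) ℝ) (hW : W.IsSymm) (hG : G.IsSymm)
    (hGinv : IsUnit G) (cs : Fin n → ℝ)
    (kk : Fin n → Fin n → ℝ) (kv : Fin n → ℝ) (ct : ℝ)
    (hconstr : krigConstraints n kk kv)
    (β : Fin n → ℝ) (hβ : ∀ i, β i = kv i - ∑ l, cs l * kk l i)
    (g : ℝ) (hg : g = ct - ∑ l, cs l * kv l)
    (kstar : ℝ)
    (hkstar : kstar = 2 * (∑ l, cs l * kv l) -
      (∑ l, ∑ j, cs l * cs j * kk l j) - ct)
    (hkne : kstar ≠ 0) :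
    krigM n k W G kk kv ct +
      krigM n k W G kk kv ct * (krigB n k W G cs)ᵀ * ((1 / kstar) • G⁻¹) *
        krigB n k W G cs * krigM n k W G kk kv ct =
    blockMat (n + 1) k (fun i j =>
      if hi : (i : ℕ) < n then
        if hj : (j : ℕ) < n then
          (kk ⟨i, hi⟩ ⟨j, hj⟩ + β ⟨i, hi⟩ * β ⟨j, hj⟩ / kstar) • G⁻¹
        else (kv ⟨i, hi⟩ + β ⟨i, hi⟩ * g / kstar) •
          (1 : Matrix (Fin k) (Fin k) ℝ)
      else if hj : (j : ℕ) < n then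
        (kv ⟨j, hj⟩ + β ⟨j, hj⟩ * g / kstar) • (1 : Matrix (Fin k) (Fin k) ℝ)
      else (ct + g ^ 2 / kstar) • G - W) :=
  stmt7_general k n W G hW hG hGinv cs kk kv ct hconstr β hβ g hg kstar
end

section
/- Let (T, μ) be a measure space, σ², f : T → ℝ measurable, and B_λ : T → ℝ^K such that t ↦ σ²(t)·B_λ(t)·B_λ(t)ᵀ, t ↦ f(t)·B_λ(t)·B_λ(t)ᵀ, t ↦ σ²(t)·B_λ(t) and t ↦ f(t)·B_λ(t) are Bochner integrable. Define W := ∫_T σ²(t)·B_λ(t)·B_λ(t)ᵀ dμ(t) and G := ∫_T f(t)·B_λ(t)·B_λ(t)ᵀ dμ(t), and assume G is invertible. Let n ≥ 2, let γ_{ij} (1 ≤ i ≠ j ≤ n) be real constants with γ_{ij} = γ_{ji}, and let γ_{01}, …, γ_{0n} be real constants. Let Q := Q(W, G, (γ_{ij}); n), assume Q is invertible with Q^{-1} = M((k_{ij}), (k_i), c̃; n) for coefficients ((k_{ij}), (k_i)) satisfying the kriging constraints, and let c ∈ ℝ^K satisfy cᵀ·B_λ(t) = 1 for μ-almost every t ∈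 T. Let J be the K(n+1)-dimensional vector whose i-th block is ∫_T (σ²(t) − γ_{0i}·f(t))·B_λ(t) dμ(t) for i = 1, …, n and whose (n+1)-th block is c. Then the first n block components b₁, …, b_n of Q^{-1}·J satisfy b_i = λ_i·c with λ_i := k_i − ∑_{j=1}^{n} k_{ij} γ_{0j} and ∑_{i=1}^{n} λ_i = 1; consequently, for each i, the weight function t ↦ b_iᵀ·B_λ(t) is equal to the constant λ_i for μ-almost every t ∈ T. -/
open Matrix

/-! Since `cᵀ B_λ = 1` a.e., `G c = ∫ f B_λ`, so the `G⁻¹`-parts of `Q⁻¹ J` that carry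
`γ_{0j}` collapse to `γ_{0j} c`, while the `σ²`-parts cancel because the rows of `(k_{ij})`
sum to zero. -/

open MeasureTheory

theorem krigConstraints.sum_row_eq_zero {n : ℕ} {kk : Fin n → Fin n → ℝ} {kv : Fin n → ℝ}
    (h : krigConstraints n kk kv) (i : Fin n) : ∑ j, kk i j = 0 := by
  obtain ⟨hsym, hcol, -⟩ := h
  simpa only [hsym i] using hcol i

theorem krigConstraints.sum_sub_sum_mul_eq_one {n : ℕ} {kk : Fin n → Fin n → ℝ}
    {kv : Fin n → ℝ} (h : krigConstraints n kk kv) (γ0 : Fin n → ℝ) :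
    ∑ i, (kv i - ∑ j, kk i j * γ0 j) = 1 := by
  obtain ⟨-, hcol, hkv⟩ := h
  rw [Finset.sum_sub_distrib, hkv, Finset.sum_comm]
  simp only [← Finset.sum_mul, hcol, zero_mul, Finset.sum_const_zero, sub_zero]

theorem krigM_mulVec_castSucc {n k : ℕ} (W G : Matrix (Fin k) (Fin k) ℝ)
    (kk : Fin n → Fin n → ℝ) (kv : Fin n → ℝ) (ct : ℝ) (v : Fin (n + 1) × Fin k → ℝ)
    (i : Fin n) (a : Fin k) :
    (krigM n k W G kk kv ct *ᵥ v) (i.castSucc, a) =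
      ∑ j, kk i j * (G⁻¹ *ᵥ fun b => v (j.castSucc, b)) a + kv i * v (Fin.last n, a) := by
  simp only [mulVec, dotProduct, Fintype.sum_prod_type, Fin.sum_univ_castSucc, krigM,
    blockMat, of_apply, Fin.val_castSucc, i.isLt, Fin.val_last, lt_irrefl, dite_true,
    dite_false, Fin.is_lt, Fin.eta, Matrix.smul_apply, smul_eq_mul, one_apply, mul_ite, mul_one,
    mul_zero, ite_mul, zero_mul, Finset.sum_ite_eq, Finset.mem_univ, ite_true, Finset.mul_sum,
    mul_assoc]

theorem krigM_mulVec_castSucc_eq_smul {n k : ℕ} (W G : Matrix (Fin k) (Fin k) ℝ)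
    {kk : Fin n → Fin n → ℝ} {kv : Fin n → ℝ} (ct : ℝ) {i : Fin n}
    (hrow : ∑ j, kk i j = 0) {w g c : Fin k → ℝ} (hg : G⁻¹ *ᵥ g = c) (γ0 : Fin n → ℝ)
    {v : Fin (n + 1) × Fin k → ℝ} (hv : ∀ j b, v (j.castSucc, b) = w b - γ0 j * g b)
    (hv_last : ∀ b, v (Fin.last n, b) = c b) (a : Fin k) :
    (krigM n k W G kk kv ct *ᵥ v) (i.castSucc, a) = (kv i - ∑ j, kk i j * γ0 j) * c a := by
  have hblock : ∀ j, (G⁻¹ *ᵥ fun b => v (j.castSucc, b)) = G⁻¹ *ᵥ w - γ0 j • c := by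
    intro j
    rw [← hg, ← mulVec_smul, ← mulVec_sub]
    congr 1
    funext b
    simp [hv]
  simp only [krigM_mulVec_castSucc, hblock, hv_last, Pi.sub_apply, Pi.smul_apply, smul_eq_mul,
    mul_sub, Finset.sum_sub_distrib, ← Finset.sum_mul, hrow, zero_mul]
  rw [Finset.sum_congr rfl fun j _ => (mul_assoc (kk i j) (γ0 j) (c a)).symm, ← Finset.sum_mul]
  ring

theorem gram_mulVec_eq_integral {T : Type*} [MeasurableSpace T] {μ : Measure T} {K : ℕ}
    {f : T → ℝ} {Bl : T → Fin K → ℝ}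
    (hint : ∀ a b : Fin K, Integrable (fun t => f t * Bl t a * Bl t b) μ)
    {c : Fin K → ℝ} (hc : ∀ᵐ t ∂μ, ∑ b, c b * Bl t b = 1) :
    (Matrix.of fun a b => ∫ t, f t * Bl t a * Bl t b ∂μ) *ᵥ c =
      fun a => ∫ t, f t * Bl t a ∂μ := by
  funext a
  calc ∑ b, (∫ t, f t * Bl t a * Bl t b ∂μ) * c b
      = ∫ t, ∑ b, f t * Bl t a * Bl t b * c b ∂μ := by
        rw [integral_finsetSum _ fun b _ => (hint a b).mul_const _]
        simp only [integral_mul_const]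
    _ = ∫ t, f t * Bl t a * ∑ b, c b * Bl t b ∂μ := by
        simp only [Finset.mul_sum, mul_comm (c _), mul_assoc]
    _ = ∫ t, f t * Bl t a ∂μ := integral_congr_ae <| hc.mono fun t ht => by simp [ht]

theorem stmt11_general (T : Type*) [MeasurableSpace T] (μ : Measure T) (K : ℕ)
    (sig f : T → ℝ) (Bl : T → Fin K → ℝ)
    (hint2 : ∀ a b : Fin K, Integrable (fun t => f t * Bl t a * Bl t b) μ)
    (hint3 : ∀ a : Fin K, Integrable (fun t => sig t * Bl t a) μ)
    (hint4 : ∀ a : Fin K, Integrable (fun t => f t * Bl t a) μ)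
    (W G : Matrix (Fin K) (Fin K) ℝ)
    (hGdef : G = Matrix.of fun a b => ∫ t, f t * Bl t a * Bl t b ∂μ)
    (hGinv : IsUnit G)
    (n : ℕ)
    (γ : Fin n → Fin n → ℝ)
    (γ0 : Fin n → ℝ)
    (kk : Fin n → Fin n → ℝ) (kv : Fin n → ℝ) (ct : ℝ)
    (hconstr : krigConstraints n kk kv)
    (hQinv : (krigQ n K W G γ)⁻¹ = krigM n K W G kk kv ct)
    (c : Fin K → ℝ) (hc : ∀ᵐ t ∂μ, ∑ a, c a * Bl t a = 1)
    (J : Fin (n + 1) × Fin K → ℝ)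
    (hJ : ∀ p : Fin (n + 1) × Fin K, J p =
      if h : (p.1 : ℕ) < n then
        ∫ t, (sig t - γ0 ⟨p.1, h⟩ * f t) * Bl t p.2 ∂μ
      else c p.2)
    (lam : Fin n → ℝ) (hlam : ∀ i, lam i = kv i - ∑ j, kk i j * γ0 j) :
    (∀ (i : Fin n) (a : Fin K),
      ((krigQ n K W G γ)⁻¹ *ᵥ J) (i.castSucc, a) = lam i * c a) ∧
    (∑ i, lam i = 1) ∧
    (∀ i : Fin n, ∀ᵐ t ∂μ,
      ∑ a, ((krigQ n K W G γ)⁻¹ *ᵥ J) (i.castSucc, a) * Bl t a = lam i) := by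
  have hGc : G⁻¹ *ᵥ (fun a => ∫ t, f t * Bl t a ∂μ) = c := by
    rw [← gram_mulVec_eq_integral hint2 hc, ← hGdef, mulVec_mulVec,
      nonsing_inv_mul G ((isUnit_iff_isUnit_det G).mp hGinv), one_mulVec]
  have hJ_block : ∀ (j : Fin n) (b : Fin K), J (j.castSucc, b) =
      (∫ t, sig t * Bl t b ∂μ) - γ0 j * ∫ t, f t * Bl t b ∂μ := by
    intro j b
    simp only [hJ, Fin.val_castSucc, j.isLt, dite_true, Fin.eta, sub_mul, mul_assoc]
    rw [integral_sub (hint3 b) ((hint4 b).const_mul _), integral_const_mul]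
  have hb : ∀ i a, ((krigQ n K W G γ)⁻¹ *ᵥ J) (i.castSucc, a) = lam i * c a := by
    intro i a
    rw [hQinv, hlam, krigM_mulVec_castSucc_eq_smul W G ct (hconstr.sum_row_eq_zero i) hGc γ0
      hJ_block (fun b => by simp [hJ])]
  refine ⟨hb, by simpa only [hlam] using hconstr.sum_sub_sum_mul_eq_one γ0, fun i => ?_⟩
  filter_upwards [hc] with t ht
  simp only [hb, mul_assoc, ← Finset.mul_sum, ht, mul_one]

/-- With W = ∫ σ²(t)·B_λ(t)·B_λ(t)ᵀ dμ and G = ∫ f(t)·B_λ(t)·B_λ(t)ᵀ dμ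
    (entrywise integrals), G invertible, Q = Q(W, G, (γ_{ij}); n) invertible
    with inverse M((k_{ij}), (k_i), c̃; n) for coefficients satisfying the
    kriging constraints, cᵀ·B_λ(t) = 1 μ-a.e., and J the block vector whose
    i-th block is ∫ (σ²(t) − γ_{0i}·f(t))·B_λ(t) dμ for i ≤ n and whose
    (n+1)-th block is c: the first n block components b_i of Q⁻¹·J satisfy
    b_i = λ_i·c with λ_i = k_i − ∑_j k_{ij} γ_{0j}, the λ_i sum to 1, and each
    weight function t ↦ b_iᵀ·B_λ(t) equals λ_i μ-a.e. -/
theorem stmt11 (T : Type*) [MeasurableSpace T] (μ : Measure T) (K : ℕ)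
    (hK : 1 ≤ K) (sig f : T → ℝ) (Bl : T → Fin K → ℝ)
    (hsig : Measurable sig) (hf : Measurable f)
    (hint1 : ∀ a b : Fin K, Integrable (fun t => sig t * Bl t a * Bl t b) μ)
    (hint2 : ∀ a b : Fin K, Integrable (fun t => f t * Bl t a * Bl t b) μ)
    (hint3 : ∀ a : Fin K, Integrable (fun t => sig t * Bl t a) μ)
    (hint4 : ∀ a : Fin K, Integrable (fun t => f t * Bl t a) μ)
    (W G : Matrix (Fin K) (Fin K) ℝ)
    (hWdef : W = Matrix.of fun a b => ∫ t, sig t * Bl t a * Bl t b ∂μ)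
    (hGdef : G = Matrix.of fun a b => ∫ t, f t * Bl t a * Bl t b ∂μ)
    (hGinv : IsUnit G)
    (n : ℕ) (hn : 2 ≤ n)
    (γ : Fin n → Fin n → ℝ) (hγ : ∀ i j, γ i j = γ j i)
    (γ0 : Fin n → ℝ)
    (hQ : IsUnit (krigQ n K W G γ))
    (kk : Fin n → Fin n → ℝ) (kv : Fin n → ℝ) (ct : ℝ)
    (hconstr : krigConstraints n kk kv)
    (hQinv : (krigQ n K W G γ)⁻¹ = krigM n K W G kk kv ct)
    (c : Fin K → ℝ) (hc : ∀ᵐ t ∂μ, ∑ a, c a * Bl t a = 1)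
    (J : Fin (n + 1) × Fin K → ℝ)
    (hJ : ∀ p : Fin (n + 1) × Fin K, J p =
      if h : (p.1 : ℕ) < n then
        ∫ t, (sig t - γ0 ⟨p.1, h⟩ * f t) * Bl t p.2 ∂μ
      else c p.2)
    (lam : Fin n → ℝ) (hlam : ∀ i, lam i = kv i - ∑ j, kk i j * γ0 j) :
    (∀ (i : Fin n) (a : Fin K),
      ((krigQ n K W G γ)⁻¹ *ᵥ J) (i.castSucc, a) = lam i * c a) ∧
    (∑ i, lam i = 1) ∧
    (∀ i : Fin n, ∀ᵐ t ∂μ,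
      ∑ a, ((krigQ n K W G γ)⁻¹ *ᵥ J) (i.castSucc, a) * Bl t a = lam i) :=
  stmt11_general T μ K sig f Bl hint2 hint3 hint4 W G hGdef hGinv n γ γ0 kk kv ct hconstr hQinv c hc
    J hJ lam hlam
end
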